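/- arXiv:1804.07073 — 3 statements merged into one kernel-verified Lean document; each statement's English description precedes it below -/
import Mathlib

section
/- Let A be a Novikov algebra (a vector space with bilinear product ∘ satisfying a∘(b∘c) - b∘(a∘c) = (a∘b)∘c - (b∘a)∘c and (a∘b)∘c = (a∘c)∘b) and let ω be a linear functional on A. Then the symmetric bilinear form ⟨a,b⟩ = ω(a∘b + b∘a) satisfies the cocycle condition ⟨a∘b, c⟩ = ⟨a, c∘b⟩ for all a, b, c in A. -/
/-- For a Novikov algebra `(V, mul)` and a linear functional `ω`, the symmetric
bilinear form `⟨a,b⟩ = ω (a∘b + b∘a)` satisfies the cocycle condition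
`⟨a∘b, c⟩ = ⟨a, c∘b⟩`. -/
theorem novikov_functional_cocycle {k V : Type*} [Field k] [AddCommGroup V] [Module k V]
    (mul : V →ₗ[k] V →ₗ[k] V)
    (h1 : ∀ a b c : V, mul a (mul b c) - mul b (mul a c) = mul (mul a b) c - mul (mul b a) c)
    (h2 : ∀ a b c : V, mul (mul a b) c = mul (mul a c) b)
    (ω : V →ₗ[k] k) :
    ∀ a b c : V,
      ω (mul (mul a b) c + mul c (mul a b)) = ω (mul a (mul c b) + mul (mul c b) a) := by
  intro a b c
  congr 1
  rw [h2 a b c, h2 c b a]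
  have h := h1 a c b
  rw [sub_eq_sub_iff_add_eq_add] at h
  exact h.symm
end

section
/- Let A be a Novikov algebra. Define operators T_a = L_a + R_a (so T_a(x) = a∘x + x∘a). Then T_a ∘ T_b - T_b ∘ T_a = T_{[a,b]} where [a,b] = a∘b - b∘a; i.e., a ↦ L_a + R_a is a Lie algebra representation of g(A) on A. -/
/-- In a Novikov algebra the operators `T_a = L_a + R_a` satisfy
`[T_a, T_b] = T_{[a,b]}`, i.e. `a ↦ L_a + R_a` is a representation of `g(A)`. -/
theorem novikov_T_representation {k V : Type*} [Field k] [AddCommGroup V] [Module k V]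
    (mul : V →ₗ[k] V →ₗ[k] V)
    (h1 : ∀ a b c : V, mul a (mul b c) - mul b (mul a c) = mul (mul a b) c - mul (mul b a) c)
    (h2 : ∀ a b c : V, mul (mul a b) c = mul (mul a c) b) :
    ∀ a b : V,
      (mul a + mul.flip a) ∘ₗ (mul b + mul.flip b)
        - (mul b + mul.flip b) ∘ₗ (mul a + mul.flip a)
      = mul (mul a b - mul b a) + mul.flip (mul a b - mul b a) := by
  intro a b
  ext x
  simp only [LinearMap.sub_apply, LinearMap.add_apply, LinearMap.comp_apply,
    LinearMap.flip_apply, map_add, map_sub, LinearMap.sub_apply, LinearMap.add_apply]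
  linear_combination (norm := abel) h1 a b x + h1 a x b - h1 b x a + h2 x b a + h2 x b a
end

section
/- Let A be a finite-dimensional Novikov algebra over ℂ. If I and J are two right-nilpotent ideals of A, then I + J is a right-nilpotent ideal. Consequently A has a largest right-nilpotent ideal N(A). -/
/-- Iterated right multiplication: `rightIter mul x [s₁,…,sₘ] = R_{sₘ} ⋯ R_{s₁} x`. -/
def rightIter {k V : Type*} [Field k] [AddCommGroup V] [Module k V]
    (mul : V →ₗ[k] V →ₗ[k] V) : V → List V → V
  | x, [] => x
  | x, s :: t => rightIter mul (mul x s) t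

/-- `I` is a (two-sided) ideal of the algebra `(V, mul)`. -/
def IsNovikovIdeal {k V : Type*} [Field k] [AddCommGroup V] [Module k V]
    (mul : V →ₗ[k] V →ₗ[k] V) (I : Submodule k V) : Prop :=
  (∀ a : V, ∀ x ∈ I, mul a x ∈ I) ∧ (∀ x ∈ I, ∀ a : V, mul x a ∈ I)

/-- `S` is right-nilpotent: some length `m ≥ 1` of iterated right multiplications by
elements of `S` annihilates the whole algebra. -/
def IsRightNilpotent {k V : Type*} [Field k] [AddCommGroup V] [Module k V]
    (mul : V →ₗ[k] V →ₗ[k] V) (I : Submodule k V) : Prop :=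
  ∃ m : ℕ, 1 ≤ m ∧ ∀ l : List V, l.length = m → (∀ s ∈ l, s ∈ I) →
    ∀ x : V, rightIter mul x l = 0

/-!
The identity `(a b) c = (a c) b` says that right multiplications commute. Hence a product of
`m + n` right multiplications by elements of `I ∪ J` can be reordered to start with `m` factors
from `I` or with `n` factors from `J`, and so vanishes; multilinearity extends this from `I ∪ J`
to its span `I + J`. Right-nilpotent ideals are thus closed under `⊔`, and in a Noetherian
algebra the supremum of all of them is attained.
-/

def KilledByRightIter {k V : Type*} [Field k] [AddCommGroup V] [Module k V]
    (mul : V →ₗ[k] V →ₗ[k] V) (S : Set V) (n : ℕ) (x : V) : Prop :=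
  ∀ l : List V, l.length = n → (∀ s ∈ l, s ∈ S) → rightIter mul x l = 0

section RightIter

variable {k V : Type*} [Field k] [AddCommGroup V] [Module k V] (mul : V →ₗ[k] V →ₗ[k] V)

theorem rightIter_append (x : V) (l₁ l₂ : List V) :
    rightIter mul x (l₁ ++ l₂) = rightIter mul (rightIter mul x l₁) l₂ := by
  induction l₁ generalizing x with
  | nil => rfl
  | cons s t ih => exact ih (mul x s)

theorem rightIter_zero (l : List V) : rightIter mul 0 l = 0 := by
  induction l with
  | nil => rfl
  | cons s t ih => simpa [rightIter] using ih

theorem rightIter_add (x y : V) (l : List V) :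
    rightIter mul (x + y) l = rightIter mul x l + rightIter mul y l := by
  induction l generalizing x y with
  | nil => rfl
  | cons s t ih => simpa [rightIter] using ih (mul x s) (mul y s)

theorem rightIter_smul (c : k) (x : V) (l : List V) :
    rightIter mul (c • x) l = c • rightIter mul x l := by
  induction l generalizing x with
  | nil => rfl
  | cons s t ih => simpa [rightIter] using ih (mul x s)

theorem rightIter_perm (h2 : ∀ a b c : V, mul (mul a b) c = mul (mul a c) b)
    {l l' : List V} (h : l.Perm l') (x : V) : rightIter mul x l = rightIter mul x l' := by
  induction h generalizing x with
  | nil => rfl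
  | cons s _ ih => exact ih (mul x s)
  | swap a b l => exact congrArg (rightIter mul · l) (h2 x b a)
  | trans _ _ ih₁ ih₂ => exact (ih₁ x).trans (ih₂ x)

theorem rightIter_append_eq_zero {S : Set V} {m : ℕ} (hS : ∀ x, KilledByRightIter mul S m x)
    {l₁ : List V} (hm : m ≤ l₁.length) (hl₁ : ∀ s ∈ l₁, s ∈ S) (x : V) (l₂ : List V) :
    rightIter mul x (l₁ ++ l₂) = 0 := by
  rw [← List.take_append_drop m l₁, List.append_assoc, rightIter_append,
    hS x _ (List.length_take_of_le hm) (fun s hs => hl₁ s (List.take_subset _ _ hs)),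
    rightIter_zero]

theorem KilledByRightIter.mul_of_mem_span {S : Set V} {n : ℕ} {x s : V}
    (hx : KilledByRightIter mul S (n + 1) x) (hs : s ∈ Submodule.span k S) :
    KilledByRightIter mul S n (mul x s) := by
  induction hs using Submodule.span_induction with
  | mem s hs => exact fun l hl hlS => hx (s :: l) (by simp [hl]) (by simpa [hs] using hlS)
  | zero => intro l _ _; simp [rightIter_zero]
  | add a b _ _ ha hb =>
    intro l hl hlS
    rw [map_add, rightIter_add, ha l hl hlS, hb l hl hlS, add_zero]
  | smul c a _ ha =>
    intro l hl hlS
    rw [map_smul, rightIter_smul, ha l hl hlS, smul_zero]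

theorem KilledByRightIter.span {S : Set V} {n : ℕ} {x : V} (hx : KilledByRightIter mul S n x) :
    KilledByRightIter mul (Submodule.span k S) n x := by
  induction n generalizing x with
  | zero =>
    intro l hl _
    rw [List.length_eq_zero_iff.mp hl]
    exact hx [] rfl (by simp)
  | succ n ih =>
    rintro (_ | ⟨s, l⟩) hl hlS
    · simp at hl
    · exact ih (hx.mul_of_mem_span mul (hlS s List.mem_cons_self)) l (by simpa using hl)
        (fun t ht => hlS t (List.mem_cons_of_mem s ht))

theorem killedByRightIter_union (h2 : ∀ a b c : V, mul (mul a b) c = mul (mul a c) b)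
    {I J : Set V} {m n : ℕ} (hI : ∀ x, KilledByRightIter mul I m x)
    (hJ : ∀ x, KilledByRightIter mul J n x) (x : V) :
    KilledByRightIter mul (I ∪ J) (m + n) x := by
  classical
  intro l hl hlS
  set lI := l.filter (· ∈ I)
  set lJ := l.filter (fun s => !decide (s ∈ I))
  have hperm : (lI ++ lJ).Perm l := List.filter_append_perm _ l
  have hlen : lI.length + lJ.length = m + n := by rw [← List.length_append, hperm.length_eq, hl]
  have hlI : ∀ s ∈ lI, s ∈ I := fun s hs => by simpa using (List.mem_filter.mp hs).2
  have hlJ : ∀ s ∈ lJ, s ∈ J := fun s hs => by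
    obtain ⟨hs, hsI⟩ := List.mem_filter.mp hs
    simpa using (hlS s hs).resolve_left (by simpa using hsI)
  rcases le_or_gt m lI.length with hm | hm
  · rw [← rightIter_perm mul h2 hperm]
    exact rightIter_append_eq_zero mul hI hm hlI x lJ
  · rw [← rightIter_perm mul h2 (List.perm_append_comm.trans hperm)]
    exact rightIter_append_eq_zero mul hJ (by omega) hlJ x lI

end RightIter

section Ideals

variable {k V : Type*} [Field k] [AddCommGroup V] [Module k V] {mul : V →ₗ[k] V →ₗ[k] V}

theorem IsNovikovIdeal.bot : IsNovikovIdeal mul ⊥ :=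
  ⟨fun a x hx => by simp_all, fun x hx a => by simp_all⟩

theorem IsNovikovIdeal.sup {I J : Submodule k V} (hI : IsNovikovIdeal mul I)
    (hJ : IsNovikovIdeal mul J) : IsNovikovIdeal mul (I ⊔ J) := by
  constructor
  · intro a x hx
    obtain ⟨i, hi, j, hj, rfl⟩ := Submodule.mem_sup.mp hx
    rw [map_add]
    exact Submodule.add_mem_sup (hI.1 a i hi) (hJ.1 a j hj)
  · intro x hx a
    obtain ⟨i, hi, j, hj, rfl⟩ := Submodule.mem_sup.mp hx
    rw [map_add, LinearMap.add_apply]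
    exact Submodule.add_mem_sup (hI.2 i hi a) (hJ.2 j hj a)

theorem IsRightNilpotent.bot : IsRightNilpotent mul ⊥ := by
  refine ⟨1, le_rfl, fun l hl hlS x => ?_⟩
  obtain ⟨s, rfl⟩ := List.length_eq_one_iff.mp hl
  simp [rightIter, (Submodule.mem_bot k).mp (hlS s (by simp))]

theorem IsRightNilpotent.sup (h2 : ∀ a b c : V, mul (mul a b) c = mul (mul a c) b)
    {I J : Submodule k V} (hI : IsRightNilpotent mul I) (hJ : IsRightNilpotent mul J) :
    IsRightNilpotent mul (I ⊔ J) := by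
  obtain ⟨m, hm, hI⟩ := hI
  obtain ⟨n, -, hJ⟩ := hJ
  refine ⟨m + n, by omega, fun l hl hlS x => ?_⟩
  have hkill := (killedByRightIter_union mul h2 (fun x l hl hlS => hI l hl hlS x)
    (fun x l hl hlS => hJ l hl hlS x) x).span
  rw [Submodule.span_union, Submodule.span_eq, Submodule.span_eq] at hkill
  exact hkill l hl hlS

theorem exists_greatest_rightNilpotent_ideal [IsNoetherian k V]
    (h2 : ∀ a b c : V, mul (mul a b) c = mul (mul a c) b) :
    ∃ N : Submodule k V, IsNovikovIdeal mul N ∧ IsRightNilpotent mul N ∧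
      ∀ I : Submodule k V, IsNovikovIdeal mul I → IsRightNilpotent mul I → I ≤ N := by
  set S := {N : Submodule k V | IsNovikovIdeal mul N ∧ IsRightNilpotent mul N}
  have hS : sSup S ∈ S :=
    CompleteLattice.WellFoundedGT.isSupClosedCompact _ inferInstance S
      ⟨⊥, .bot, .bot⟩ fun I hI J hJ => ⟨hI.1.sup hJ.1, hI.2.sup h2 hJ.2⟩
  exact ⟨sSup S, hS.1, hS.2, fun I hI hIn => le_sSup ⟨hI, hIn⟩⟩

end Ideals

theorem novikov_largest_right_nilpotent_ideal_general {V : Type*} [AddCommGroup V] [Module ℂ V]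
    [FiniteDimensional ℂ V]
    (mul : V →ₗ[ℂ] V →ₗ[ℂ] V)
    (h2 : ∀ a b c : V, mul (mul a b) c = mul (mul a c) b)
    (I J : Submodule ℂ V)
    (hI : IsNovikovIdeal mul I) (hJ : IsNovikovIdeal mul J)
    (hIn : IsRightNilpotent mul I) (hJn : IsRightNilpotent mul J) :
    (IsNovikovIdeal mul (I ⊔ J) ∧ IsRightNilpotent mul (I ⊔ J)) ∧
    ∃ N : Submodule ℂ V, IsNovikovIdeal mul N ∧ IsRightNilpotent mul N ∧
      ∀ I' : Submodule ℂ V, IsNovikovIdeal mul I' → IsRightNilpotent mul I' → I' ≤ N :=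
  ⟨⟨hI.sup hJ, hIn.sup h2 hJn⟩, exists_greatest_rightNilpotent_ideal h2⟩

/-- In a finite-dimensional Novikov algebra over `ℂ`, the sum of two right-nilpotent
ideals is a right-nilpotent ideal; consequently there is a largest right-nilpotent
ideal `N(A)`. -/
theorem novikov_largest_right_nilpotent_ideal {V : Type*} [AddCommGroup V] [Module ℂ V]
    [FiniteDimensional ℂ V]
    (mul : V →ₗ[ℂ] V →ₗ[ℂ] V)
    (h1 : ∀ a b c : V, mul a (mul b c) - mul b (mul a c) = mul (mul a b) c - mul (mul b a) c)
    (h2 : ∀ a b c : V, mul (mul a b) c = mul (mul a c) b)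
    (I J : Submodule ℂ V)
    (hI : IsNovikovIdeal mul I) (hJ : IsNovikovIdeal mul J)
    (hIn : IsRightNilpotent mul I) (hJn : IsRightNilpotent mul J) :
    (IsNovikovIdeal mul (I ⊔ J) ∧ IsRightNilpotent mul (I ⊔ J)) ∧
    ∃ N : Submodule ℂ V, IsNovikovIdeal mul N ∧ IsRightNilpotent mul N ∧
      ∀ I' : Submodule ℂ V, IsNovikovIdeal mul I' → IsRightNilpotent mul I' → I' ≤ N :=
  novikov_largest_right_nilpotent_ideal_general mul h2 I J hI hJ hIn hJn
end
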